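/- arXiv:1910.05175 — 2 statements merged into one kernel-verified Lean document; each statement's English description precedes it below -/
import Mathlib

section
/- Let V be a 3-dimensional oriented real inner product space, S : V → V a symmetric linear map with trace zero, and B a 2-form on V. Define (B ⌟ S)(X,Y) = B(SX, Y) + B(X, SY), and for a 1-form α define (α ⌟ S)(X) = α(SX). Then ∗(B ⌟ S) = -(∗B) ⌟ S, where ∗ is the Hodge star operator of V. -/
open scoped RealInnerProductSpace

/-- (Proposition 2.4) In a 3-dimensional oriented inner product space
(orientation fixed via an oriented orthonormal basis `e₀,e₁,e₂` defining the
Hodge star `∗` from 2-forms to 1-forms), for a symmetric trace-free linear map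
`S` and a 2-form `B`, one has `∗(B ⌟ S) = -(∗B) ⌟ S`, where
`(B ⌟ S)(X,Y) = B(SX,Y) + B(X,SY)` and `(α ⌟ S)(X) = α(SX)`. -/
theorem hodge_star_contract_symmetric_traceless
    {V : Type*} [NormedAddCommGroup V] [InnerProductSpace ℝ V]
    (e : OrthonormalBasis (Fin 3) ℝ V)
    (S : V →ₗ[ℝ] V)
    (hSsymm : ∀ X Y, ⟪S X, Y⟫ = ⟪X, S Y⟫)
    (hStrace : ∑ i, ⟪S (e i), e i⟫ = 0)
    (B : V → V → ℝ)
    (hBalt : ∀ X Y, B X Y = -B Y X)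
    (hBadd : ∀ X Y Z, B (X + Y) Z = B X Z + B Y Z)
    (hBsmul : ∀ (c : ℝ) (X Y : V), B (c • X) Y = c * B X Y)
    (star2 : (V → V → ℝ) → V → ℝ)
    (hstar2 : ∀ (C : V → V → ℝ) (X : V),
      star2 C X = C (e 1) (e 2) * ⟪X, e 0⟫ + C (e 2) (e 0) * ⟪X, e 1⟫
        + C (e 0) (e 1) * ⟪X, e 2⟫) :
    ∀ X, star2 (fun a b => B (S a) b + B a (S b)) X = -star2 B (S X) := by
  intro X
  -- symmetry of the matrix entries of S
  have hsym : ∀ i j, ⟪S (e i), e j⟫ = ⟪S (e j), e i⟫ := fun i j => by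
    rw [hSsymm, real_inner_comm]
  -- expansion of S (e i) in the basis
  have hSe : ∀ i, S (e i) = ∑ j, ⟪S (e i), e j⟫ • e j := fun i => by
    conv_lhs => rw [← e.sum_repr (S (e i))]
    refine Finset.sum_congr rfl fun j _ => ?_
    rw [e.repr_apply_apply, real_inner_comm]
  -- B applied to S (e i) in the first slot
  have hB1 : ∀ i y, B (S (e i)) y
      = ⟪S (e i), e 0⟫ * B (e 0) y + ⟪S (e i), e 1⟫ * B (e 1) y
        + ⟪S (e i), e 2⟫ * B (e 2) y := fun i y => by
    rw [hSe i, Fin.sum_univ_three, hBadd, hBadd, hBsmul, hBsmul, hBsmul]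
    simp [inner_add_left, real_inner_smul_left, orthonormal_iff_ite.mp e.orthonormal]
  -- B applied to S (e i) in the second slot
  have hB2 : ∀ x i, B x (S (e i)) = -B (S (e i)) x := fun x i => hBalt _ _
  -- inner products with S X
  have hXS : ∀ i, ⟪S X, e i⟫
      = ⟪S (e i), e 0⟫ * ⟪X, e 0⟫ + ⟪S (e i), e 1⟫ * ⟪X, e 1⟫
        + ⟪S (e i), e 2⟫ * ⟪X, e 2⟫ := fun i => by
    rw [hSsymm, hSe i, Fin.sum_univ_three, inner_add_right, inner_add_right,
      real_inner_smul_right, real_inner_smul_right, real_inner_smul_right]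
    simp [inner_add_left, real_inner_smul_left, orthonormal_iff_ite.mp e.orthonormal]
  have hB0 : ∀ i, B (e i) (e i) = 0 := fun i => by
    have := hBalt (e i) (e i); linarith
  rw [Fin.sum_univ_three] at hStrace
  rw [hstar2, hstar2]
  simp only [hB2, hB1, hXS, hB0,
    show B (e 0) (e 2) = -B (e 2) (e 0) from hBalt _ _,
    show B (e 1) (e 0) = -B (e 0) (e 1) from hBalt _ _,
    show B (e 2) (e 1) = -B (e 1) (e 2) from hBalt _ _,
    hsym 1 0, hsym 2 0, hsym 2 1]
  linear_combination (B (e 1) (e 2) * ⟪X, e 0⟫ + B (e 2) (e 0) * ⟪X, e 1⟫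
    + B (e 0) (e 1) * ⟪X, e 2⟫) * hStrace
end

section
/- Let M be a 3-dimensional Riemannian manifold, v a smooth vector field, ∇^v as above with torsion T^v, and define the intrinsic Ricci tensor Ric^v-hat(X) = Ric^v(X) + Σᵢ (∇^v_{eᵢ} T^v)(X, eᵢ). Then Ric^v-hat = Ric⁰ + 2 v⊗v + 2 ∇^{0,s} v, i.e., Ric^v-hat(X) = Ric⁰(X) + 2⟨X,v⟩v + 2∇^{0,s}_X v, where ∇^{0,s}v is the symmetric part of ∇⁰v. -/
/-- (Theorem 4.4) On a 3-dimensional Riemannian manifold, for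
`∇^v_X Y = ∇⁰_X Y - K_v(X,Y)` (here `n - 1 = 2`), `K_v(X,Y) = ⟨Y,v⟩X - ⟨X,Y⟩v`,
with torsion `T^v`, the intrinsic Ricci tensor
`Ric^v-hat(X) = Ric^v(X) + Σᵢ (∇^v_{eᵢ} T^v)(X, eᵢ)` satisfies
`Ric^v-hat(X) = Ric⁰(X) + 2⟨X,v⟩v + 2∇^{0,s}_X v`, where `∇^{0,s}v` is the
symmetric part of `∇⁰v`.  Vector fields form a module `X` over the ring `R` of
smooth functions (an ℝ-algebra) acting as derivations via `ρ`; `g` is the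
metric, `br` the Lie bracket, `cd` the Levi-Civita connection; `e` is a
(local) orthonormal frame; `(∇^v_c T^v)(a,b) = ∇^v_c(T^v(a,b)) -
T^v(∇^v_c a, b) - T^v(a, ∇^v_c b)`. -/
theorem intrinsic_ricci_tensor_dim3
    (R : Type*) [CommRing R] [Algebra ℝ R]
    (X : Type*) [AddCommGroup X] [Module R X]
    (ρ : X → R → R)
    (g : X →ₗ[R] X →ₗ[R] R)
    (br : X → X → X) (cd : X → X → X)
    (hg_symm : ∀ a b, g a b = g b a)
    (hmetric : ∀ a b c, ρ a (g b c) = g (cd a b) c + g b (cd a c))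
    (htorsion_free : ∀ a b, cd a b - cd b a = br a b)
    (hcd_add₁ : ∀ a a' b, cd (a + a') b = cd a b + cd a' b)
    (hcd_smul₁ : ∀ (r : R) (a b : X), cd (r • a) b = r • cd a b)
    (hcd_add₂ : ∀ a b b', cd a (b + b') = cd a b + cd a b')
    (hcd_smul₂ : ∀ (r : R) (a b : X), cd a (r • b) = ρ a r • b + r • cd a b)
    (hρ_mul : ∀ (a : X) (r s : R), ρ a (r * s) = ρ a r * s + r * ρ a s)
    -- a (local) orthonormal frame in dimension 3
    (e : Fin 3 → X)
    (he : ∀ i j, g (e i) (e j) = if i = j then 1 else 0)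
    (hexp : ∀ x : X, x = ∑ i, g x (e i) • e i)
    (v : X)
    (K : X → X → X) (hK : ∀ a b, K a b = g b v • a - g a b • v)
    (cdv : X → X → X) (hcdv : ∀ a b, cdv a b = cd a b - K a b)
    -- torsion of ∇^v
    (T : X → X → X) (hT : ∀ a b, T a b = cdv a b - cdv b a - br a b)
    -- curvature and Ricci tensors of ∇^v and of ∇⁰
    (Rv R0 : X → X → X → X)
    (hRv : ∀ a b c, Rv a b c = cdv a (cdv b c) - cdv b (cdv a c) - cdv (br a b) c)
    (hR0 : ∀ a b c, R0 a b c = cd a (cd b c) - cd b (cd a c) - cd (br a b) c)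
    (Ricv Ric0 : X → X)
    (hRicv : ∀ a, Ricv a = ∑ i, Rv a (e i) (e i))
    (hRic0 : ∀ a, Ric0 a = ∑ i, R0 a (e i) (e i))
    -- intrinsic Ricci tensor
    (RicHat : X → X)
    (hRicHat : ∀ a, RicHat a
      = Ricv a + ∑ i, (cdv (e i) (T a (e i)) - T (cdv (e i) a) (e i)
          - T a (cdv (e i) (e i))))
    -- symmetric part of ∇⁰v
    (s : X → X)
    (hs : ∀ a b, g (s a) b = (1 / 2 : ℝ) • (g (cd a v) b + g (cd b v) a)) :
    ∀ a : X, RicHat a = Ric0 a + ((2 : R) * g a v) • v + (2 : R) • s a := by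

  intro a
  -- ρ of constants
  have hρ_one : ∀ x : X, ρ x 1 = 0 := by
    intro x
    have h := hρ_mul x 1 1
    rw [mul_one, one_mul, mul_one] at h
    exact (left_eq_add.mp h)
  have hcd_sub₂ : ∀ x y z, cd x (y - z) = cd x y - cd x z := by
    intro x y z
    have h : cd x (y - z) + cd x z = cd x y := by
      rw [← hcd_add₂, sub_add_cancel]
    exact eq_sub_of_add_eq h
  have hcd_sub₁ : ∀ x y z, cd (x - y) z = cd x z - cd y z := by
    intro x y z
    have h : cd (x - y) z + cd y z = cd x z := by
      rw [← hcd_add₁, sub_add_cancel]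
    exact eq_sub_of_add_eq h
  -- diagonal antisymmetry
  have hdiag0 : ∀ (x : X) (i : Fin 3), g (cd x (e i)) (e i) = 0 := by
    intro x i
    have h := hmetric x (e i) (e i)
    rw [he i i, if_pos rfl, hρ_one, hg_symm (e i) (cd x (e i))] at h
    have h2 : (2 : ℝ) • g (cd x (e i)) (e i) = 0 := by
      rw [two_smul]; exact h.symm
    calc g (cd x (e i)) (e i) = (1/2 : ℝ) • ((2:ℝ) • g (cd x (e i)) (e i)) := by
          rw [smul_smul]; norm_num
      _ = 0 := by rw [h2, smul_zero]
  -- torsion in closed form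
  have hT' : ∀ x y, T x y = g x v • y - g y v • x := by
    intro x y
    rw [hT, hcdv, hcdv, hK, hK, ← htorsion_free x y, hg_symm y x]
    abel
  have hcdv' : ∀ x y, cdv x y = cd x y - g y v • x + g x y • v := by
    intro x y
    rw [hcdv, hK]
    abel
  -- per-index key identity
  have key : ∀ i, Rv a (e i) (e i)
      + (cdv (e i) (T a (e i)) - T (cdv (e i) a) (e i)
          - T a (cdv (e i) (e i)))
      = R0 a (e i) (e i)
        + ((g (cd (e i) v) a - g (cd a v) (e i)) • e i
          + (g a v - g v (e i) * g a (e i)) • v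
          + cd a v - g a (e i) • cd (e i) v) := by
    intro i
    simp only [hRv, hR0, hT', hcdv', ← htorsion_free, hcd_sub₁, hcd_add₁, hcd_smul₁,
      hcd_sub₂, hcd_add₂, hcd_smul₂, map_add, map_sub, map_smul, LinearMap.add_apply,
      LinearMap.sub_apply, LinearMap.smul_apply, smul_eq_mul, hρ_mul, hmetric,
      he, hdiag0, hρ_one, if_true, ite_true, reduceIte, smul_sub, smul_add, smul_smul,
      mul_one, one_mul, mul_zero, zero_mul, add_zero, zero_add, sub_zero, zero_smul,
      one_smul, zero_sub, smul_zero, smul_neg, neg_neg, neg_zero]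
    match_scalars
    all_goals try ring1
    · rw [hg_symm (e i) (cd a v), hg_symm a (cd (e i) v), hg_symm (e i) a]; ring
    · rw [hg_symm (e i) (cd a (e i)), hdiag0, hg_symm (e i) a, hg_symm (e i) v]; ring
  -- sum lemmas
  have S2 : ∀ x y : X, ∑ i, g x (e i) * g y (e i) = g x y := by
    intro x y
    conv_rhs => rw [hexp y]
    rw [map_sum]
    simp only [map_smul, smul_eq_mul]
    exact Finset.sum_congr rfl (fun i _ => mul_comm _ _)
  have S3 : ∀ x w : X, ∑ i, g x (e i) • cd (e i) w = cd x w := by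
    intro x w
    have h0 : cd (0 : X) w = 0 := by
      have h := hcd_add₁ 0 0 w
      rw [add_zero] at h
      exact (left_eq_add.mp h)
    have hsum : ∀ (t : Finset (Fin 3)) (f : Fin 3 → X),
        cd (∑ i ∈ t, f i) w = ∑ i ∈ t, cd (f i) w := by
      intro t f
      induction t using Finset.cons_induction with
      | empty => simpa using h0
      | cons i t hi ih => rw [Finset.sum_cons, Finset.sum_cons, hcd_add₁, ih]
    conv_rhs => rw [hexp x]
    rw [hsum Finset.univ (fun i => g x (e i) • e i)]
    exact Finset.sum_congr rfl (fun i _ => (hcd_smul₁ _ _ _).symm)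
  have hs2 : ∀ b : X, (2 : R) * g (s a) b = g (cd a v) b + g (cd b v) a := by
    intro b
    rw [hs, Algebra.smul_def, ← mul_assoc,
      show (2 : R) = algebraMap ℝ R 2 from (map_ofNat _ 2).symm, ← map_mul,
      show (2 : ℝ) * (1 / 2) = 1 by norm_num, map_one, one_mul]
  have h2s : (2 : R) • s a = cd a v + ∑ i, g (cd (e i) v) a • e i := by
    have hterm : ∀ i : Fin 3, (2 : R) • (g (s a) (e i) • e i)
        = g (cd a v) (e i) • e i + g (cd (e i) v) a • e i := by
      intro i
      rw [smul_smul, hs2 (e i), add_smul]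
    conv_lhs => rw [hexp (s a)]
    rw [Finset.smul_sum, Finset.sum_congr rfl (fun i _ => hterm i),
      Finset.sum_add_distrib, ← hexp (cd a v)]
  have hsumG : ∑ i, ((g (cd (e i) v) a - g (cd a v) (e i)) • e i
        + (g a v - g v (e i) * g a (e i)) • v
        + cd a v - g a (e i) • cd (e i) v)
      = ((2 : R) * g a v) • v + (2 : R) • s a := by
    rw [h2s]
    simp only [sub_smul, Finset.sum_add_distrib, Finset.sum_sub_distrib]
    rw [← hexp (cd a v), S3 a v, Finset.sum_const, Finset.sum_const,
      ← Finset.sum_smul, S2 v a, hg_symm v a, Finset.card_univ, Fintype.card_fin]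
    module
  rw [hRicHat a, hRicv a, ← Finset.sum_add_distrib,
    Finset.sum_congr rfl (fun i _ => key i), Finset.sum_add_distrib, ← hRic0 a,
    hsumG]
  abel
end
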